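/- Let λ ≥ 2 and h ≥ 1 be coprime integers, where λ is not a power of a single prime, let a : ℕ → ℂ be λ-automatic and multiplicative, and let χ : ℕ → ℂ be a Dirichlet character of modulus hλ such that a(n) = χ(n) for all n ≥ 1 coprime to hλ. Let p be a prime dividing λ and set α = ν_p(hλ). Suppose χ_p is a Dirichlet character of modulus p^α and χ' is a Dirichlet character of modulus hλ/p^α with χ(n) = χ_p(n)·χ'(n) for all n, and let m be an integer with m ≡ 1 (mod p^α) and m ≡ p (mod hλ/p^α). Then the sequence n ↦ χ_p(n / p^{ν_p(n)}) · a(p^{ν_p(n)}) / χ(m)^{ν_p(n)} is periodic on the positive integers. -/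

import Mathlib

/-- A sequence `f : ℕ → ℂ` is `lam`-automatic if its `lam`-kernel is finite. -/
def IsAutomatic (lam : ℕ) (f : ℕ → ℂ) : Prop :=
  {g : ℕ → ℂ | ∃ k r : ℕ, r < lam ^ k ∧ g = fun n => f (lam ^ k * n + r)}.Finite

/-- A sequence is multiplicative if `f 1 = 1` and `f (m*n) = f m * f n` for coprime `m n ≥ 1`. -/
def IsMultiplicativeSeq (f : ℕ → ℂ) : Prop :=
  f 1 = 1 ∧ ∀ m n : ℕ, 1 ≤ m → 1 ≤ n → Nat.Coprime m n → f (m * n) = f m * f n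

/-- Eventually periodic sequence. -/
def EventuallyPeriodicSeq (f : ℕ → ℂ) : Prop :=
  ∃ d : ℕ, 1 ≤ d ∧ ∃ n₀ : ℕ, ∀ n ≥ n₀, f (n + d) = f n

/-- A Dirichlet character of modulus `k`: `k`-periodic, completely multiplicative,
and vanishing exactly at arguments not coprime to `k`. -/
def IsDirichletCharacterSeq (k : ℕ) (χ : ℕ → ℂ) : Prop :=
  (∀ n : ℕ, χ (n + k) = χ n) ∧ (∀ m n : ℕ, χ (m * n) = χ m * χ n) ∧
    (∀ n : ℕ, χ n = 0 ↔ 1 < Nat.gcd n k)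

/-!
Write `λ = p^α Q` with `Q ≥ 2` prime to `p`, and `ω = χ(m) = χ'(p)`. The sequence
`n ↦ χp(n / p^ν) a(p^ν) / ω^ν` (with `ν = ν_p n`) has period `p^(L+α)` as soon as
`χp(v) a(p^j) / ω^j` does not depend on `j ≥ L` nor on `v` prime to `p`.

Finiteness of the kernel gives `k < k'` with `a(p^(αk) (Q^k n + 1)) = a(p^(αk') (Q^k' n + 1))`
for all `n`. When `h ∣ n`, both `Q^k n + 1` and `Q^k' n + 1` are `≡ 1 mod hQ`, so `χ'` is trivial
on them and `a(p^i x) = χp(unit part of x) a(p^(i+ν)) / ω^(i+ν) · ω^i` there. Choosing `n` with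
`Q^k n + 1 ≡ p^e v mod p^(e+α)` prescribes valuation and unit class on the left, while on the right
both are determined by `Q^(k'-k) - 1` alone; hence the required constancy.
-/

namespace IsDirichletCharacterSeq

variable {k : ℕ} {χ : ℕ → ℂ}

theorem map_mul (hχ : IsDirichletCharacterSeq k χ) (m n : ℕ) : χ (m * n) = χ m * χ n :=
  hχ.2.1 m n

theorem map_ne_zero (hχ : IsDirichletCharacterSeq k χ) {n : ℕ} (hn : n.Coprime k) : χ n ≠ 0 := by
  rw [ne_eq, hχ.2.2, hn.gcd_eq_one]
  exact lt_irrefl 1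

theorem map_one (hχ : IsDirichletCharacterSeq k χ) : χ 1 = 1 := by
  have h : χ 1 * χ 1 = χ 1 * 1 := by rw [mul_one, ← hχ.map_mul, one_mul]
  exact mul_left_cancel₀ (hχ.map_ne_zero (Nat.coprime_one_left k)) h

theorem map_pow (hχ : IsDirichletCharacterSeq k χ) (x e : ℕ) : χ (x ^ e) = χ x ^ e := by
  induction e with
  | zero => simpa using hχ.map_one
  | succ e ih => rw [pow_succ, pow_succ, hχ.map_mul, ih]

theorem eq_of_modEq (hχ : IsDirichletCharacterSeq k χ) {x y : ℕ} (hxy : x ≡ y [MOD k]) :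
    χ x = χ y := by
  have hper : Function.Periodic χ k := hχ.1
  rw [← hper.map_mod_nat x, ← hper.map_mod_nat y, hxy]

end IsDirichletCharacterSeq

theorem IsAutomatic.exists_lt_kernel_eq {lam : ℕ} {f : ℕ → ℂ} (hf : IsAutomatic lam f)
    (k r : ℕ → ℕ) (hr : ∀ i, r i < lam ^ k i) :
    ∃ i j, i < j ∧ ∀ n, f (lam ^ k i * n + r i) = f (lam ^ k j * n + r j) := by
  have := hf.to_subtype
  obtain ⟨i, j, hij, hfij⟩ := Finite.exists_ne_map_eq_of_infinite fun i =>
    (⟨fun n => f (lam ^ k i * n + r i), k i, r i, hr i, rfl⟩ :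
      {g : ℕ → ℂ | ∃ k r : ℕ, r < lam ^ k ∧ g = fun n => f (lam ^ k * n + r)})
  have hfij : ∀ n, f (lam ^ k i * n + r i) = f (lam ^ k j * n + r j) :=
    congrFun (congrArg Subtype.val hfij)
  rcases hij.lt_or_gt with hlt | hlt
  · exact ⟨i, j, hlt, hfij⟩
  · exact ⟨j, i, hlt, fun n => (hfij n).symm⟩

theorem Nat.exists_mul_modEq_of_coprime {c N : ℕ} (hc : c.Coprime N) (y : ℕ) :
    ∃ n, c * n ≡ y [MOD N] := by
  obtain hN | hN := le_or_gt N 1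
  · interval_cases N
    · exact ⟨y, by rw [(Nat.coprime_zero_right c).1 hc, one_mul]⟩
    · exact ⟨0, Nat.modEq_one⟩
  · obtain ⟨m, -, hm⟩ := Nat.exists_mul_mod_eq_one_of_coprime hc hN
    have hcm : c * m ≡ 1 [MOD N] := by rw [Nat.ModEq, hm, Nat.mod_eq_of_lt hN]
    exact ⟨m * y, by simpa [mul_assoc] using hcm.mul_right y⟩

theorem Nat.exists_eq_pow_mul_not_dvd {p n : ℕ} (hp : 1 < p) (hn : n ≠ 0) :
    ∃ j w, n = p ^ j * w ∧ ¬ p ∣ w :=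
  ⟨_, _, (Nat.pow_padicValNat_mul_divMaxPow p n).symm, Nat.not_dvd_divMaxPow hp hn⟩

theorem padicValNat_pow_mul_of_not_dvd {p w : ℕ} (hp : 1 < p) (hw : ¬ p ∣ w) (j : ℕ) :
    padicValNat p (p ^ j * w) = j := by
  rw [padicValNat_base_pow_mul hp (by rintro rfl; exact hw (dvd_zero p)),
    padicValNat.eq_zero_of_not_dvd hw, zero_add]

theorem Nat.exists_eq_pow_mul_of_modEq {p j α x u : ℕ} (hp : p ≠ 0)
    (hx : x ≡ p ^ j * u [MOD p ^ (j + α)]) : ∃ w, x = p ^ j * w ∧ w ≡ u [MOD p ^ α] := by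
  obtain ⟨w, rfl⟩ : p ^ j ∣ x :=
    (hx.dvd_iff (pow_dvd_pow p (Nat.le_add_right j α))).2 (dvd_mul_right _ _)
  rw [pow_add] at hx
  exact ⟨w, rfl, Nat.ModEq.mul_left_cancel' (pow_ne_zero j hp) hx⟩

theorem padic_split_periodic_of_eventually_const {β : Type*} {p : ℕ} (hp : p.Prime) {α L : ℕ}
    {F : ℕ → ℕ → β} (hF : ∀ j, Function.Periodic (F · j) (p ^ α)) {c : β}
    (hc : ∀ j ≥ L, ∀ u, ¬ p ∣ u → F u j = c) {n : ℕ} (hn : n ≠ 0) :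
    F ((n + p ^ (L + α)) / p ^ padicValNat p (n + p ^ (L + α))) (padicValNat p (n + p ^ (L + α)))
      = F (n / p ^ padicValNat p n) (padicValNat p n) := by
  obtain ⟨j, w, rfl, hw⟩ := Nat.exists_eq_pow_mul_not_dvd hp.one_lt hn
  rw [padicValNat_pow_mul_of_not_dvd hp.one_lt hw, Nat.mul_div_cancel_left _ (pow_pos hp.pos _)]
  by_cases hjL : j < L
  · have hsum : p ^ j * w + p ^ (L + α) = p ^ j * (w + p ^ (L - j) * p ^ α) := by
      rw [mul_add, ← pow_add, ← pow_add, show j + (L - j + α) = L + α by omega]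
    have hw' : ¬ p ∣ w + p ^ (L - j) * p ^ α := by
      rwa [Nat.dvd_add_left (dvd_mul_of_dvd_left (dvd_pow_self p (by omega : L - j ≠ 0)) _)]
    rw [hsum, padicValNat_pow_mul_of_not_dvd hp.one_lt hw',
      Nat.mul_div_cancel_left _ (pow_pos hp.pos _)]
    exact (hF j).nat_mul _ w
  · obtain ⟨i, v, hsum, hv⟩ := Nat.exists_eq_pow_mul_not_dvd hp.one_lt
      (by positivity : p ^ j * w + p ^ (L + α) ≠ 0)
    have hLi : L ≤ i := by
      have hdvd : p ^ L ∣ p ^ i * v := hsum ▸ dvd_add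
        (dvd_mul_of_dvd_left (pow_dvd_pow p (by omega)) w) (pow_dvd_pow p (by omega))
      rw [Nat.pow_dvd_iff_le_padicValNat hp.ne_one (hsum ▸ by positivity),
        padicValNat_pow_mul_of_not_dvd hp.one_lt hv] at hdvd
      exact hdvd
    rw [hsum, padicValNat_pow_mul_of_not_dvd hp.one_lt hv,
      Nat.mul_div_cancel_left _ (pow_pos hp.pos _), hc i hLi v hv, hc j (by omega) w hw]

theorem pow_mul_add_one_modEq_one {Q h k n : ℕ} (hk : k ≠ 0) (hn : h ∣ n) :
    Q ^ k * n + 1 ≡ 1 [MOD h * Q] := by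
  have hdvd : h * Q ∣ Q ^ k * n := by
    rw [mul_comm h]; exact mul_dvd_mul (dvd_pow_self Q hk) hn
  simpa using (Nat.modEq_zero_iff_dvd.2 hdvd).add_right 1

-- `(Q^(k+T) n + 1) + p^E D = Q^T (Q^k n + 1)`, so both sides are `≡ -p^E D`.
theorem pow_add_mul_add_one_modEq {p Q E D α k T n : ℕ} (hp : p ≠ 0)
    (hQT : Q ^ T = p ^ E * D + 1) (hU : p ^ (E + α) ∣ Q ^ k * n + 1) :
    Q ^ (k + T) * n + 1 ≡ p ^ E * ((p ^ α - 1) * D) [MOD p ^ (E + α)] := by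
  obtain ⟨c, hc⟩ := hU
  have hQT' : (Q : ℤ) ^ T = p ^ E * D + 1 := by exact_mod_cast hQT
  have hc' : (Q : ℤ) ^ k * n + 1 = p ^ (E + α) * c := by exact_mod_cast hc
  rw [Nat.modEq_iff_dvd]
  refine ⟨D - (p ^ E * D + 1) * c, ?_⟩
  push_cast [Nat.cast_sub (Nat.one_le_pow _ _ (Nat.pos_of_ne_zero hp))]
  simp only [pow_add] at hc' ⊢
  linear_combination (-((Q : ℤ) ^ k * n)) * hQT' - (p ^ E * D + 1) * hc'

section CharacterTwist

variable {p α Q h : ℕ} {a χp χ' : ℕ → ℂ}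

theorem apply_pow_mul_of_coprime (hp : p.Prime) (ha : IsMultiplicativeSeq a)
    (hχ' : IsDirichletCharacterSeq (h * Q) χ')
    (haχ : ∀ n, 1 ≤ n → n.Coprime (h * (p ^ α * Q)) → a n = χp n * χ' n) (hω : χ' p ≠ 0)
    {j w : ℕ} (hw : ¬ p ∣ w) (hwhQ : w.Coprime (h * Q)) :
    a (p ^ j * w) = χp w * a (p ^ j) / χ' p ^ j * χ' (p ^ j * w) := by
  have hw0 : 1 ≤ w := Nat.one_le_iff_ne_zero.2 (by rintro rfl; exact hw (dvd_zero p))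
  have hpw : p.Coprime w := (Nat.Prime.coprime_iff_not_dvd hp).2 hw
  have hwhpQ : w.Coprime (h * (p ^ α * Q)) := by
    rw [Nat.coprime_mul_iff_right] at hwhQ ⊢
    exact ⟨hwhQ.1, Nat.Coprime.mul_right (hpw.symm.pow_right α) hwhQ.2⟩
  rw [ha.2 _ _ (Nat.one_le_pow _ _ hp.pos) hw0 (hpw.pow_left j), haχ w hw0 hwhpQ,
    hχ'.map_mul, hχ'.map_pow]
  field_simp

theorem apply_pow_mul_of_modEq (hp : p.Prime) (hα : 1 ≤ α) (ha : IsMultiplicativeSeq a)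
    (hχp : IsDirichletCharacterSeq (p ^ α) χp) (hχ' : IsDirichletCharacterSeq (h * Q) χ')
    (haχ : ∀ n, 1 ≤ n → n.Coprime (h * (p ^ α * Q)) → a n = χp n * χ' n) (hω : χ' p ≠ 0)
    {x j u : ℕ} (hx1 : x ≡ 1 [MOD h * Q]) (hxu : x ≡ p ^ j * u [MOD p ^ (j + α)])
    (hu : ¬ p ∣ u) (i : ℕ) :
    a (p ^ i * x) = χp u * a (p ^ (i + j)) / χ' p ^ (i + j) * χ' p ^ i := by
  obtain ⟨w, rfl, hwu⟩ := Nat.exists_eq_pow_mul_of_modEq hp.ne_zero hxu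
  have hw : ¬ p ∣ w := fun hpw => hu ((hwu.dvd_iff (dvd_pow_self p (by omega))).1 hpw)
  have hwhQ : w.Coprime (h * Q) :=
    Nat.Coprime.coprime_mul_left (hx1.gcd_eq.trans (Nat.gcd_one_left _))
  have hx : χ' (p ^ j * w) = 1 := (hχ'.eq_of_modEq hx1).trans hχ'.map_one
  rw [← mul_assoc, ← pow_add, apply_pow_mul_of_coprime hp ha hχ' haχ hω hw hwhQ, pow_add, mul_assoc,
    hχ'.map_mul, hχ'.map_pow, hx, mul_one, hχp.eq_of_modEq hwu]

theorem exists_eventually_const_of_kernel_eq (hp : p.Prime) (hα : 1 ≤ α) (hQ : 2 ≤ Q)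
    (hpQ : ¬ p ∣ Q) (hph : ¬ p ∣ h) (ha : IsMultiplicativeSeq a)
    (hχp : IsDirichletCharacterSeq (p ^ α) χp) (hχ' : IsDirichletCharacterSeq (h * Q) χ')
    (haχ : ∀ n, 1 ≤ n → n.Coprime (h * (p ^ α * Q)) → a n = χp n * χ' n) (hω : χ' p ≠ 0)
    {k k' : ℕ} (hk : k ≠ 0) (hkk' : k < k')
    (hker : ∀ n, a (p ^ (α * k) * (Q ^ k * n + 1)) = a (p ^ (α * k') * (Q ^ k' * n + 1))) :
    ∃ L C, ∀ j ≥ L, ∀ v, ¬ p ∣ v → χp v * a (p ^ j) / χ' p ^ j = C := by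
  obtain ⟨T, rfl⟩ := Nat.exists_eq_add_of_lt hkk'
  have hQT : 1 < Q ^ (T + 1) := Nat.one_lt_pow T.succ_ne_zero (by omega)
  obtain ⟨E, D, hQTD, hpD⟩ := Nat.exists_eq_pow_mul_not_dvd hp.one_lt
    (Nat.sub_ne_zero_of_lt hQT)
  have hu₀ : ¬ p ∣ (p ^ α - 1) * D := by
    refine (Nat.Prime.dvd_mul hp).not.2 (not_or.2 ⟨fun hd => ?_, hpD⟩)
    have := Nat.dvd_sub (dvd_pow_self p (by omega : α ≠ 0)) hd
    rw [Nat.sub_sub_self (Nat.one_le_pow _ _ hp.pos)] at this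
    exact hp.not_dvd_one this
  set k' := k + T + 1
  refine ⟨α * k + (E + α), χp ((p ^ α - 1) * D) * a (p ^ (α * k' + E)) / χ' p ^ (α * k' + E)
    * χ' p ^ (α * k') / χ' p ^ (α * k), fun j hj v hv => ?_⟩
  obtain ⟨e, rfl⟩ := Nat.exists_eq_add_of_le (le_of_add_le_left hj)
  have hv0 : 1 ≤ p ^ e * v := Nat.one_le_iff_ne_zero.2 <|
    mul_ne_zero (pow_ne_zero _ hp.ne_zero) (by rintro rfl; exact hv (dvd_zero p))
  obtain ⟨n, hhn, hU⟩ : ∃ n, h ∣ n ∧ Q ^ k * n + 1 ≡ p ^ e * v [MOD p ^ (e + α)] := by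
    have hcop : (Q ^ k * h).Coprime (p ^ (e + α)) :=
      Nat.Coprime.pow_right _ (Nat.Coprime.mul_left
        (((Nat.Prime.coprime_iff_not_dvd hp).2 hpQ).symm.pow_left k)
        ((Nat.Prime.coprime_iff_not_dvd hp).2 hph).symm)
    obtain ⟨n, hn⟩ := Nat.exists_mul_modEq_of_coprime hcop (p ^ e * v - 1)
    refine ⟨h * n, dvd_mul_right h n, ?_⟩
    rw [← mul_assoc, ← Nat.sub_add_cancel hv0]
    exact hn.add_right 1
  have hpU : p ^ (E + α) ∣ Q ^ k * n + 1 :=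
    (pow_dvd_pow p (by omega)).trans
      ((hU.dvd_iff (pow_dvd_pow p (Nat.le_add_right e α))).2 (dvd_mul_right _ _))
  have hW : Q ^ k' * n + 1 ≡ p ^ E * ((p ^ α - 1) * D) [MOD p ^ (E + α)] :=
    pow_add_mul_add_one_modEq (T := T + 1) hp.ne_zero (by omega) hpU
  have hker := hker n
  rw [apply_pow_mul_of_modEq hp hα ha hχp hχ' haχ hω
      (pow_mul_add_one_modEq_one hk hhn) hU hv,
    apply_pow_mul_of_modEq hp hα ha hχp hχ' haχ hω
      (pow_mul_add_one_modEq_one (by omega) hhn) hW hu₀] at hker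
  rw [eq_div_iff (pow_ne_zero _ hω), ← hker]

end CharacterTwist

theorem exists_eq_prime_pow_mul_of_not_prime_pow {lam p : ℕ} (hp : p.Prime) (hpl : p ∣ lam)
    (hlam : lam ≠ 0) (hnotpp : ¬ ∃ (q k : ℕ), q.Prime ∧ lam = q ^ k) :
    ∃ α Q, lam = p ^ α * Q ∧ 1 ≤ α ∧ ¬ p ∣ Q ∧ 2 ≤ Q := by
  obtain ⟨α, Q, rfl, hpQ⟩ := Nat.exists_eq_pow_mul_not_dvd hp.one_lt hlam
  refine ⟨α, Q, rfl, Nat.one_le_iff_ne_zero.2 ?_, hpQ, ?_⟩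
  · rintro rfl
    exact hpQ (by simpa using hpl)
  · have hQ0 : Q ≠ 0 := by rintro rfl; exact hlam (mul_zero _)
    have hQ1 : Q ≠ 1 := by rintro rfl; exact hnotpp ⟨p, α, hp, mul_one _⟩
    omega

theorem stmt_14_general (lam h : ℕ) (hlam : 2 ≤ lam)
    (hcop : Nat.Coprime h lam)
    (hnotpp : ¬ ∃ (p k : ℕ), p.Prime ∧ lam = p ^ k)
    (a : ℕ → ℂ) (haut : IsAutomatic lam a) (ha : IsMultiplicativeSeq a)
    (χ : ℕ → ℂ)
    (haχ : ∀ n : ℕ, 1 ≤ n → Nat.Coprime n (h * lam) → a n = χ n)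
    (p : ℕ) (hp : p.Prime) (hpl : p ∣ lam)
    (α : ℕ) (hα : α = padicValNat p (h * lam))
    (χp : ℕ → ℂ) (hχp : IsDirichletCharacterSeq (p ^ α) χp)
    (χ' : ℕ → ℂ) (hχ' : IsDirichletCharacterSeq ((h * lam) / p ^ α) χ')
    (hsplit : ∀ n : ℕ, χ n = χp n * χ' n)
    (m : ℕ) (hm1 : m ≡ 1 [MOD p ^ α]) (hm2 : m ≡ p [MOD (h * lam) / p ^ α]) :
    ∃ d : ℕ, 1 ≤ d ∧ ∀ n : ℕ, 1 ≤ n →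
      χp ((n + d) / p ^ padicValNat p (n + d)) * a (p ^ padicValNat p (n + d)) /
          (χ m) ^ padicValNat p (n + d) =
        χp (n / p ^ padicValNat p n) * a (p ^ padicValNat p n) /
          (χ m) ^ padicValNat p n := by
  have := Fact.mk hp
  have hph : ¬ p ∣ h := fun hd => hp.not_dvd_one (hcop.gcd_eq_one ▸ Nat.dvd_gcd hd hpl)
  obtain ⟨α', Q, rfl, hα1, hpQ, hQ⟩ :=
    exists_eq_prime_pow_mul_of_not_prime_pow hp hpl (by omega) hnotpp
  obtain rfl : α = α' := by
    rw [hα, padicValNat.mul (by rintro rfl; exact hph (dvd_zero p)) (by omega),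
      padicValNat.eq_zero_of_not_dvd hph, zero_add, padicValNat_pow_mul_of_not_dvd hp.one_lt hpQ]
  rw [mul_left_comm, Nat.mul_div_cancel_left _ (pow_pos hp.pos α)] at hχ' hm2
  have hω : χ m = χ' p := by
    rw [hsplit, hχp.eq_of_modEq hm1, hχ'.eq_of_modEq hm2, hχp.map_one, one_mul]
  have hω0 : χ' p ≠ 0 := hχ'.map_ne_zero <| Nat.Coprime.mul_right
    ((Nat.Prime.coprime_iff_not_dvd hp).2 hph) ((Nat.Prime.coprime_iff_not_dvd hp).2 hpQ)
  have hfac (k n : ℕ) : (p ^ α * Q) ^ k * n + p ^ (α * k) = p ^ (α * k) * (Q ^ k * n + 1) := by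
    rw [mul_pow, ← pow_mul]; ring
  obtain ⟨i, j, hij, hker⟩ := haut.exists_lt_kernel_eq (· + 1) (fun i => p ^ (α * (i + 1)))
    fun i => by
      rw [mul_pow, ← pow_mul]
      exact lt_mul_of_one_lt_right (pow_pos hp.pos _) (Nat.one_lt_pow i.succ_ne_zero (by omega))
  obtain ⟨L, C, hC⟩ := exists_eventually_const_of_kernel_eq hp hα1 hQ hpQ hph ha hχp hχ'
    (fun n hn hc => (haχ n hn hc).trans (hsplit n)) hω0 i.succ_ne_zero (Nat.succ_lt_succ hij)
    fun n => by rw [← hfac, ← hfac]; exact hker n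
  refine ⟨p ^ (L + α), Nat.one_le_pow _ _ hp.pos, fun n hn => ?_⟩
  rw [hω]
  exact padic_split_periodic_of_eventually_const hp (F := fun u j => χp u * a (p ^ j) / χ' p ^ j)
    (fun j u => by simp only [hχp.1]) hC (by omega)

theorem stmt_14 (lam h : ℕ) (hlam : 2 ≤ lam) (hh : 1 ≤ h)
    (hcop : Nat.Coprime h lam)
    (hnotpp : ¬ ∃ (p k : ℕ), p.Prime ∧ lam = p ^ k)
    (a : ℕ → ℂ) (haut : IsAutomatic lam a) (ha : IsMultiplicativeSeq a)
    (χ : ℕ → ℂ) (hχ : IsDirichletCharacterSeq (h * lam) χ)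
    (haχ : ∀ n : ℕ, 1 ≤ n → Nat.Coprime n (h * lam) → a n = χ n)
    (p : ℕ) (hp : p.Prime) (hpl : p ∣ lam)
    (α : ℕ) (hα : α = padicValNat p (h * lam))
    (χp : ℕ → ℂ) (hχp : IsDirichletCharacterSeq (p ^ α) χp)
    (χ' : ℕ → ℂ) (hχ' : IsDirichletCharacterSeq ((h * lam) / p ^ α) χ')
    (hsplit : ∀ n : ℕ, χ n = χp n * χ' n)
    (m : ℕ) (hm1 : m ≡ 1 [MOD p ^ α]) (hm2 : m ≡ p [MOD (h * lam) / p ^ α]) :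
    ∃ d : ℕ, 1 ≤ d ∧ ∀ n : ℕ, 1 ≤ n →
      χp ((n + d) / p ^ padicValNat p (n + d)) * a (p ^ padicValNat p (n + d)) /
          (χ m) ^ padicValNat p (n + d) =
        χp (n / p ^ padicValNat p n) * a (p ^ padicValNat p n) /
          (χ m) ^ padicValNat p n :=
  stmt_14_general lam h hlam hcop hnotpp a haut ha χ haχ p hp hpl α hα χp hχp χ' hχ' hsplit m hm1
    hm2
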